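/- arXiv:1401.5339 — 2 statements merged into one kernel-verified Lean document; each statement's English description precedes it below -/
import Mathlib

section
/- If W is row-stochastic and A is diagonal with entries in [0,1), then the limit matrix V = (I − AW)^{-1}(I − A) is row-stochastic: it is entrywise nonnegative and V·1 = 1. -/
/-!
If `M ≥ 0` has all row sums `< 1`, then `1 - M` obeys a discrete minimum principle: at a
minimal coordinate `x i < 0` of `x`, `((1 - M) *ᵥ x) i ≤ (1 - ∑ⱼ M i j) * x i < 0`.
Hence `1 - M` is invertible and its inverse, whose columns solve `(1 - M) x = eⱼ`, is
entrywise nonnegative. With `M = A W` this makes `(1 - A W)⁻¹ (1 - A)` nonnegative, and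
`(1 - A W) *ᵥ 1 = (1 - A) *ᵥ 1` because `W *ᵥ 1 = 1`, so its row sums are `1`.
-/

namespace Matrix

variable {n R : Type*} [Fintype n] [DecidableEq n] [Field R] [LinearOrder R]
  [IsStrictOrderedRing R] {M : Matrix n n R}

theorem nonneg_of_one_sub_mulVec_nonneg (hM0 : ∀ i j, 0 ≤ M i j) (hM1 : ∀ i, ∑ j, M i j < 1)
    {x : n → R} (hx : 0 ≤ (1 - M) *ᵥ x) : 0 ≤ x := by
  intro k
  have : Nonempty n := ⟨k⟩
  obtain ⟨i, hi⟩ := Finite.exists_min x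
  by_contra! hk
  have hxi : x i < 0 := (hi k).trans_lt hk
  have hmean : (∑ j, M i j) * x i ≤ (M *ᵥ x) i := by
    rw [Finset.sum_mul]
    exact Finset.sum_le_sum fun j _ => mul_le_mul_of_nonneg_left (hi j) (hM0 i j)
  have hrow : (M *ᵥ x) i ≤ x i := by
    simpa [sub_mulVec] using hx i
  nlinarith [mul_neg_of_pos_of_neg (sub_pos.2 (hM1 i)) hxi]

theorem isUnit_one_sub_of_sum_row_lt_one (hM0 : ∀ i j, 0 ≤ M i j)
    (hM1 : ∀ i, ∑ j, M i j < 1) : IsUnit (1 - M) := by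
  refine mulVec_injective_iff_isUnit.1 fun x y hxy => ?_
  have hle : ∀ x y : n → R, (1 - M) *ᵥ x = (1 - M) *ᵥ y → y ≤ x := fun x y h =>
    sub_nonneg.1 <| nonneg_of_one_sub_mulVec_nonneg hM0 hM1 (by rw [mulVec_sub, h, sub_self])
  exact le_antisymm (hle y x hxy.symm) (hle x y hxy)

theorem inv_one_sub_apply_nonneg (hM0 : ∀ i j, 0 ≤ M i j) (hM1 : ∀ i, ∑ j, M i j < 1)
    (i j : n) : 0 ≤ (1 - M)⁻¹ i j := by
  have hcol : (1 - M) *ᵥ ((1 - M)⁻¹ *ᵥ Pi.single j 1) = Pi.single j 1 := by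
    rw [mulVec_mulVec, mul_nonsing_inv _
      ((isUnit_iff_isUnit_det _).1 (isUnit_one_sub_of_sum_row_lt_one hM0 hM1)), one_mulVec]
  have := nonneg_of_one_sub_mulVec_nonneg hM0 hM1 (hcol ▸ Pi.single_nonneg.2 zero_le_one) i
  simpa [mulVec_single_one] using this

theorem inv_one_sub_diagonal_mul_mul_one_sub_diagonal_mem_rowStochastic {W : Matrix n n R}
    (hW : W ∈ rowStochastic R n) {a : n → R} (ha : ∀ i, a i ∈ Set.Ico 0 1) :
    (1 - diagonal a * W)⁻¹ * (1 - diagonal a) ∈ rowStochastic R n := by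
  have hM0 : ∀ i j, 0 ≤ (diagonal a * W) i j := fun i j => by
    rw [diagonal_mul]
    exact mul_nonneg (ha i).1 (nonneg_of_mem_rowStochastic hW)
  have hM1 : ∀ i, ∑ j, (diagonal a * W) i j < 1 := fun i => by
    simp_rw [diagonal_mul, ← Finset.mul_sum, sum_row_of_mem_rowStochastic hW, mul_one]
    exact (ha i).2
  have hones : (1 - diagonal a * W) *ᵥ 1 = (1 - diagonal a) *ᵥ 1 := by
    rw [sub_mulVec, sub_mulVec, ← mulVec_mulVec, one_vecMul_of_mem_rowStochastic hW]
  refine mem_rowStochastic.2 ⟨fun i j => ?_, ?_⟩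
  · have hdiag : 1 - diagonal a = diagonal (1 - a) := by
      rw [← diagonal_one, diagonal_sub]
      rfl
    rw [hdiag, mul_diagonal]
    exact mul_nonneg (inv_one_sub_apply_nonneg hM0 hM1 i j) (sub_nonneg.2 (ha j).2.le)
  · rw [← mulVec_mulVec, ← hones, mulVec_mulVec, nonsing_inv_mul _
      ((isUnit_iff_isUnit_det _).1 (isUnit_one_sub_of_sum_row_lt_one hM0 hM1)), one_mulVec]

end Matrix

theorem limit_rowStochastic {n : ℕ} (W : Matrix (Fin n) (Fin n) ℝ)
    (hW0 : ∀ i j, 0 ≤ W i j) (hW1 : W.mulVec 1 = 1)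
    (a : Fin n → ℝ) (ha : ∀ i, a i ∈ Set.Ico (0:ℝ) 1)
    (A : Matrix (Fin n) (Fin n) ℝ) (hA : A = Matrix.diagonal a) :
    (∀ i j, 0 ≤ ((1 - A * W)⁻¹ * (1 - A)) i j) ∧
      ((1 - A * W)⁻¹ * (1 - A)).mulVec 1 = 1 := by
  subst hA
  exact Matrix.mem_rowStochastic.1 <|
    Matrix.inv_one_sub_diagonal_mul_mul_one_sub_diagonal_mem_rowStochastic
      (Matrix.mem_rowStochastic.2 ⟨hW0, hW1⟩) ha
end

section
/- Convex hull invariance of the limit: if W is row-stochastic, A diagonal with a_ii ∈ [0,1), and X(∞) = (I − AW)^{-1}(I − A)X(0), then each row of X(∞) lies in the convex hull of the rows of X(0). -/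
/-!
Write `T = A W`. It is nonnegative with row sums `a i < 1`, so a minimum principle shows that
`(1 - T) x ≥ 0` forces `x ≥ 0`. Hence `1 - T` is invertible with nonnegative inverse, and
`V = (1 - T)⁻¹ (1 - A)` is nonnegative. Since `W 1 = 1` gives `(1 - T) 1 = 1 - a = (1 - A) 1`,
also `V 1 = 1`. So `V` is row-stochastic, and every row of `V X(0)` is a convex combination of
the rows of `X(0)`.
-/

namespace Matrix

variable {ι κ R : Type*} [Fintype ι] [DecidableEq ι] [Field R] [LinearOrder R]
  [IsStrictOrderedRing R]

theorem row_mul_mem_convexHull_of_mem_rowStochastic {M : Matrix ι ι R}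
    (hM : M ∈ rowStochastic R ι) (X : Matrix ι κ R) (i : ι) :
    (M * X) i ∈ convexHull R (Set.range X) := by
  have hrow : (M * X) i = ∑ j, M i j • X j := by
    ext k
    simp only [mul_apply, Finset.sum_apply, Pi.smul_apply, smul_eq_mul]
  rw [hrow]
  exact (convex_convexHull R _).sum_mem (fun j _ => nonneg_of_mem_rowStochastic hM)
    (sum_row_of_mem_rowStochastic hM i) fun j _ => subset_convexHull R _ ⟨j, rfl⟩

section Substochastic

variable {T : Matrix ι ι R}

/-- At a minimal coordinate `x k` of `x`, `(1 - ∑ j, T k j) * x k ≥ ((1 - T) *ᵥ x) k ≥ 0`. -/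
theorem nonneg_of_nonneg_one_sub_mulVec (hT : ∀ i j, 0 ≤ T i j) (hrow : ∀ i, ∑ j, T i j < 1)
    {x : ι → R} (hx : 0 ≤ (1 - T) *ᵥ x) : 0 ≤ x := by
  cases isEmpty_or_nonempty ι
  · exact fun i => isEmptyElim i
  obtain ⟨k, hk⟩ := Finite.exists_min x
  have hmin : (1 - ∑ j, T k j) * x k ≥ ((1 - T) *ᵥ x) k := by
    calc (1 - ∑ j, T k j) * x k = x k - ∑ j, T k j * x k := by
          rw [sub_mul, Finset.sum_mul, one_mul]
      _ ≥ x k - ∑ j, T k j * x j := by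
        gcongr with j
        · exact hT k j
        · exact hk j
      _ = ((1 - T) *ᵥ x) k := by rw [sub_mulVec, one_mulVec]; rfl
  have hxk : 0 ≤ x k := nonneg_of_mul_nonneg_right (le_trans (hx k) hmin) (sub_pos.2 (hrow k))
  exact fun i => hxk.trans (hk i)

theorem isUnit_det_one_sub (hT : ∀ i j, 0 ≤ T i j) (hrow : ∀ i, ∑ j, T i j < 1) :
    IsUnit (1 - T).det := by
  refine isUnit_iff_ne_zero.2 fun hdet => ?_
  obtain ⟨v, hv, hTv⟩ := exists_mulVec_eq_zero_iff.2 hdet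
  have hpos : 0 ≤ v := nonneg_of_nonneg_one_sub_mulVec hT hrow hTv.ge
  have hneg : 0 ≤ -v :=
    nonneg_of_nonneg_one_sub_mulVec hT hrow (by rw [mulVec_neg, hTv, neg_zero])
  exact hv (le_antisymm (neg_nonneg.1 hneg) hpos)

theorem inv_one_sub_nonneg (hT : ∀ i j, 0 ≤ T i j) (hrow : ∀ i, ∑ j, T i j < 1) (i j : ι) :
    0 ≤ (1 - T)⁻¹ i j := by
  have hcol : (1 - T) *ᵥ ((1 - T)⁻¹ *ᵥ Pi.single j 1) = Pi.single j 1 := by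
    rw [mulVec_mulVec, mul_nonsing_inv _ (isUnit_det_one_sub hT hrow), one_mulVec]
  have := nonneg_of_nonneg_one_sub_mulVec hT hrow (hcol ▸ Pi.single_nonneg.2 zero_le_one) i
  rwa [mulVec_single_one] at this

end Substochastic

theorem inv_one_sub_diagonal_mul_mul_mem_rowStochastic {W : Matrix ι ι R}
    (hW : W ∈ rowStochastic R ι) {a : ι → R} (ha₀ : ∀ i, 0 ≤ a i) (ha₁ : ∀ i, a i < 1) :
    (1 - diagonal a * W)⁻¹ * (1 - diagonal a) ∈ rowStochastic R ι := by
  set T := diagonal a * W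
  have hT : ∀ i j, 0 ≤ T i j := fun i j => by
    simpa only [T, diagonal_mul] using mul_nonneg (ha₀ i) (nonneg_of_mem_rowStochastic hW)
  have hrow : ∀ i, ∑ j, T i j < 1 := fun i => by
    simpa only [T, diagonal_mul, ← Finset.mul_sum, sum_row_of_mem_rowStochastic hW i, mul_one]
      using ha₁ i
  have hones : (1 - diagonal a) *ᵥ 1 = (1 - T) *ᵥ 1 := by
    rw [sub_mulVec, sub_mulVec, ← mulVec_mulVec, one_vecMul_of_mem_rowStochastic hW]
  refine mem_rowStochastic.2 ⟨fun i j => ?_, ?_⟩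
  · have hD : 1 - diagonal a = diagonal fun i => 1 - a i := by rw [← diagonal_one, diagonal_sub]
    rw [hD, mul_diagonal]
    exact mul_nonneg (inv_one_sub_nonneg hT hrow i j) (sub_nonneg.2 (ha₁ j).le)
  · rw [← mulVec_mulVec, hones, mulVec_mulVec, nonsing_inv_mul _ (isUnit_det_one_sub hT hrow),
      one_mulVec]

end Matrix

theorem limit_rows_in_convexHull {n m : ℕ} (W : Matrix (Fin n) (Fin n) ℝ)
    (hW0 : ∀ i j, 0 ≤ W i j) (hW1 : W.mulVec 1 = 1)
    (a : Fin n → ℝ) (ha : ∀ i, a i ∈ Set.Ico (0:ℝ) 1)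
    (A : Matrix (Fin n) (Fin n) ℝ) (hA : A = Matrix.diagonal a)
    (X0 Xinf : Matrix (Fin n) (Fin m) ℝ)
    (hX : Xinf = (1 - A * W)⁻¹ * (1 - A) * X0) :
    ∀ i, Xinf i ∈ convexHull ℝ (Set.range fun j => X0 j) := by
  subst hA hX
  have hV := Matrix.inv_one_sub_diagonal_mul_mul_mem_rowStochastic
    (Matrix.mem_rowStochastic.2 ⟨hW0, hW1⟩) (fun i => (ha i).1) fun i => (ha i).2
  exact Matrix.row_mul_mem_convexHull_of_mem_rowStochastic hV X0
end
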